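/- arXiv:1803.03393 — 10 statements merged into one kernel-verified Lean document; each statement's English description precedes it below -/
import Mathlib

section
/- Let k ≥ 1 be an integer and let H be an s-uniform hypergraph (s ≥ 2) with maximum degree Δ ≥ 1. Then the k-chromatic number of H satisfies χ_k(H) ≤ ⌈Δ/k⌉, i.e., the vertex set V(H) can be partitioned into at most ⌈Δ/k⌉ parts V₁, …, V_t such that for each part V_i, every vertex of V_i lies in at most k edges of H entirely contained in V_i. -/
/-!
Colour with `t = ⌈Δ/k⌉` colours so as to minimise the number of monochromatic edges. If a
vertex `v` lay in more than `k` monochromatic edges, look, for each colour `j`, at the edges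
through `v` that would become monochromatic if `v` were recoloured `j`. Since every edge has a
vertex other than `v`, these families are disjoint for distinct `j`, so their sizes add up to at
most `deg v ≤ Δ ≤ t k`; as the family of the current colour has more than `k` members, some colour
`j` has fewer than `k`. Recolouring `v` with `j` then strictly decreases the number of
monochromatic edges.
-/

open Finset Function

section Recolouring

variable {V α : Type*} [DecidableEq V] [DecidableEq α] (E : Finset (Finset V))

def monoEdges (c : V → α) : Finset (Finset V) :=
  E.filter fun e => ∀ u ∈ e, ∀ w ∈ e, c u = c w

def monoEdgesAt (c : V → α) (v : V) : Finset (Finset V) :=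
  (monoEdges E c).filter (v ∈ ·)

theorem monoEdgesAt_eq_filter (c : V → α) (v : V) :
    monoEdgesAt E c v = E.filter fun e => v ∈ e ∧ ∀ u ∈ e, c u = c v := by
  ext e
  simp only [monoEdgesAt, monoEdges, mem_filter]
  constructor
  · rintro ⟨⟨he, hmono⟩, hv⟩
    exact ⟨he, hv, fun u hu => hmono u hu v hv⟩
  · rintro ⟨he, hv, hcol⟩
    exact ⟨⟨he, fun u hu w hw => (hcol u hu).trans (hcol w hw).symm⟩, hv⟩

theorem filter_not_mem_monoEdges_update (c : V → α) (v : V) (j : α) :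
    (monoEdges E (update c v j)).filter (v ∉ ·) = (monoEdges E c).filter (v ∉ ·) := by
  ext e
  simp only [monoEdges, mem_filter, and_congr_left_iff, and_congr_right_iff]
  intro hv _
  have hupd : ∀ u ∈ e, update c v j u = c u := fun u hu =>
    update_of_ne (ne_of_mem_of_not_mem hu hv) j c
  exact forall₂_congr fun u hu => forall₂_congr fun w hw => by rw [hupd u hu, hupd w hw]

theorem card_monoEdges_update_add (c : V → α) (v : V) (j : α) :
    #(monoEdges E (update c v j)) + #(monoEdgesAt E c v) =
      #(monoEdges E c) + #(monoEdgesAt E (update c v j) v) := by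
  have hsplit : ∀ d : V → α,
      #((monoEdges E d).filter (v ∉ ·)) + #(monoEdgesAt E d v) = #(monoEdges E d) := fun d => by
    rw [add_comm]
    exact card_filter_add_card_filter_not (v ∈ ·)
  rw [← hsplit c, ← hsplit (update c v j), filter_not_mem_monoEdges_update]
  ring

theorem pairwiseDisjoint_monoEdgesAt_update (hE : ∀ e ∈ E, 1 < #e) (c : V → α) (v : V)
    (s : Finset α) : (s : Set α).PairwiseDisjoint fun j => monoEdgesAt E (update c v j) v := by
  intro i _ j _ hij
  refine disjoint_left.mpr fun e hei hej => hij ?_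
  dsimp only at hei hej
  rw [monoEdgesAt_eq_filter, mem_filter] at hei hej
  obtain ⟨u, hu, huv⟩ := exists_mem_ne (hE e hei.1) v
  have hi := hei.2.2 u hu
  have hj := hej.2.2 u hu
  rw [update_of_ne huv, update_self] at hi hj
  exact hi.symm.trans hj

theorem sum_card_monoEdgesAt_update_le [Fintype α] (hE : ∀ e ∈ E, 1 < #e) (c : V → α) (v : V) :
    ∑ j, #(monoEdgesAt E (update c v j) v) ≤ #(E.filter (v ∈ ·)) := by
  rw [← card_biUnion (pairwiseDisjoint_monoEdgesAt_update E hE c v univ)]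
  refine card_le_card fun e he => ?_
  obtain ⟨j, -, he⟩ := mem_biUnion.mp he
  rw [monoEdgesAt_eq_filter, mem_filter] at he
  exact mem_filter.mpr ⟨he.1, he.2.1⟩

end Recolouring

theorem exists_lt_of_sum_le_card_mul {ι : Type*} [Fintype ι] (f : ι → ℕ) {k : ℕ} {i : ι}
    (hi : k < f i) (hsum : ∑ j, f j ≤ Fintype.card ι * k) : ∃ j, f j < k := by
  by_contra! hge
  have hlt : ∑ _j : ι, k < ∑ j, f j :=
    sum_lt_sum (fun j _ => hge j) ⟨i, mem_univ i, hi⟩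
  rw [sum_const, card_univ, smul_eq_mul] at hlt
  omega

theorem exists_colouring_card_monoEdgesAt_le {V α : Type*} [Fintype V] [DecidableEq V]
    [Fintype α] [DecidableEq α] [Nonempty α] (E : Finset (Finset V)) (hE : ∀ e ∈ E, 1 < #e)
    (k : ℕ) (hdeg : ∀ v, #(E.filter (v ∈ ·)) ≤ Fintype.card α * k) :
    ∃ c : V → α, ∀ v, #(monoEdgesAt E c v) ≤ k := by
  obtain ⟨c, -, hmin⟩ := exists_min_image univ (fun c : V → α => #(monoEdges E c)) univ_nonempty
  refine ⟨c, fun v => ?_⟩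
  by_contra! hv
  have hv' : k < #(monoEdgesAt E (update c v (c v)) v) := by rwa [update_eq_self]
  obtain ⟨j, hj⟩ := exists_lt_of_sum_le_card_mul (fun j => #(monoEdgesAt E (update c v j) v)) hv'
    ((sum_card_monoEdgesAt_update_le E hE c v).trans (hdeg v))
  have hdecr := card_monoEdges_update_add E c v j
  have := hmin (update c v j) (mem_univ _)
  omega

/-- If `k ≥ 1` and `H` is an `s`-uniform hypergraph (`s ≥ 2`) with maximum degree `Δ ≥ 1`,
then the vertex set can be partitioned into at most `⌈Δ/k⌉` parts (color classes of a
coloring `c`) such that within each part every vertex lies in at most `k` edges entirely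
contained in that part, i.e. `χ_k(H) ≤ ⌈Δ/k⌉`. -/
theorem chromatic_k_le_ceil_maxDegree_div
    {V : Type*} [Fintype V] [DecidableEq V] (s k : ℕ) (hk : 1 ≤ k) (hs : 2 ≤ s)
    (E : Finset (Finset V)) (hunif : ∀ e ∈ E, e.card = s)
    (Δ : ℕ) (hΔ : Δ = Finset.univ.sup (fun v => (E.filter (fun e => v ∈ e)).card))
    (hΔ1 : 1 ≤ Δ) :
    ∃ c : V → Fin (⌈(Δ : ℚ) / (k : ℚ)⌉.toNat),
      ∀ i : Fin (⌈(Δ : ℚ) / (k : ℚ)⌉.toNat), ∀ v : V, c v = i →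
        (E.filter (fun e => v ∈ e ∧ ∀ u ∈ e, c u = i)).card ≤ k := by
  generalize hct : ⌈(Δ : ℚ) / k⌉.toNat = t
  have ht : t = ⌈(Δ : ℚ) / k⌉₊ := hct ▸ Int.ceil_toNat _
  have hk0 : (0 : ℚ) < k := by exact_mod_cast hk
  have : Nonempty (Fin t) :=
    ⟨⟨0, ht ▸ Nat.ceil_pos.mpr (div_pos (by exact_mod_cast hΔ1) hk0)⟩⟩
  have hΔle : Δ ≤ t * k := by
    rw [ht]
    exact_mod_cast (div_le_iff₀ hk0).mp (Nat.le_ceil ((Δ : ℚ) / k))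
  have hdeg : ∀ v, #(E.filter (v ∈ ·)) ≤ Fintype.card (Fin t) * k := fun v => by
    rw [Fintype.card_fin]
    exact (hΔ ▸ le_sup (f := fun v => #(E.filter (v ∈ ·))) (mem_univ v)).trans hΔle
  obtain ⟨c, hc⟩ := exists_colouring_card_monoEdgesAt_le E
    (fun e he => by rw [hunif e he]; omega) k hdeg
  refine ⟨c, fun i v hvi => ?_⟩
  subst hvi
  have hv := hc v
  rw [monoEdgesAt_eq_filter] at hv
  -- the statement decides `∀ u ∈ e, _` through `Fintype V`; `convert` reconciles the instances
  convert hv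
end

section
/- Let k ≥ 1 be an integer and let H be an s-uniform hypergraph (s ≥ 2) of order n ≥ 1 with maximum degree Δ ≥ 1. Then the k-independence number satisfies α_k(H) ≥ n / ⌈Δ/k⌉. -/
/-- The `k`-independence number of the hypergraph with edge set `E`: the maximum
cardinality of a set `S` of vertices such that every vertex of `S` lies in at most `k`
edges entirely contained in `S`. -/
noncomputable def alphak {V : Type*} [Fintype V] [DecidableEq V]
    (E : Finset (Finset V)) (k : ℕ) : ℕ :=
  Finset.sup (Finset.univ : Finset (Finset V))
    (fun S => if ∀ v ∈ S, (E.filter (fun e => v ∈ e ∧ e ⊆ S)).card ≤ k then S.card else 0)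

/-- If `k ≥ 1` and `H` is an `s`-uniform hypergraph (`s ≥ 2`) of order `n ≥ 1` with
maximum degree `Δ ≥ 1`, then `α_k(H) ≥ n / ⌈Δ/k⌉`. -/
theorem alphak_ge_card_div_ceil_maxDegree_div
    {V : Type*} [Fintype V] [DecidableEq V] (s k : ℕ) (hk : 1 ≤ k) (hs : 2 ≤ s)
    (E : Finset (Finset V)) (hunif : ∀ e ∈ E, e.card = s)
    (hn : 1 ≤ Fintype.card V)
    (Δ : ℕ) (hΔ : Δ = Finset.univ.sup (fun v => (E.filter (fun e => v ∈ e)).card))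
    (hΔ1 : 1 ≤ Δ) :
    (alphak E k : ℝ) ≥ (Fintype.card V : ℝ) / (⌈(Δ : ℝ) / (k : ℝ)⌉ : ℝ) := by
  classical
  have hk0 : (0:ℝ) < (k:ℝ) := by exact_mod_cast hk
  have hΔ0 : (0:ℝ) < (Δ:ℝ) := by exact_mod_cast hΔ1
  set T : ℤ := ⌈(Δ : ℝ) / (k : ℝ)⌉ with hT
  have hT1 : 1 ≤ T := by
    rw [hT]; exact Int.ceil_pos.mpr (div_pos hΔ0 hk0)
  set t : ℕ := T.toNat with htdef
  have htT : (t : ℤ) = T := Int.toNat_of_nonneg (by omega)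
  have ht0 : 0 < t := by omega
  have hΔtk : Δ ≤ t * k := by
    have h1 : (Δ : ℝ) / (k : ℝ) ≤ (T : ℝ) := Int.le_ceil _
    have h2 : (Δ : ℝ) ≤ (T : ℝ) * (k : ℝ) := (div_le_iff₀ hk0).mp h1
    have h3 : (t : ℝ) = (T : ℝ) := by exact_mod_cast htT
    rw [← h3] at h2
    exact_mod_cast h2
  haveI : Nonempty (Fin t) := ⟨⟨0, ht0⟩⟩
  -- the potential: number of monochromatic edges
  set Φ : (V → Fin t) → ℕ :=
    fun f => (E.filter (fun e => ∀ a ∈ e, ∀ b ∈ e, f a = f b)).card with hΦ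
  obtain ⟨f, -, hf⟩ := Finset.exists_min_image (Finset.univ : Finset (V → Fin t)) Φ
    ⟨Classical.arbitrary _, Finset.mem_univ _⟩
  -- key claim: every vertex lies in at most k monochromatic edges
  have hkey : ∀ v : V, (E.filter (fun e => v ∈ e ∧ ∀ w ∈ e, f w = f v)).card ≤ k := by
    intro v
    by_contra hv
    push_neg at hv
    set A : Fin t → Finset (Finset V) :=
      fun i => E.filter (fun e => v ∈ e ∧ ∀ w ∈ e, w ≠ v → f w = i) with hA
    have hwit : ∀ e ∈ E, v ∈ e → ∃ w ∈ e, w ≠ v := by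
      intro e he hve
      have hcard : e.card = s := hunif e he
      exact Finset.exists_mem_ne (by omega) v
    have hdisj : ∀ i ∈ (Finset.univ : Finset (Fin t)), ∀ j ∈ (Finset.univ : Finset (Fin t)),
        i ≠ j → Disjoint (A i) (A j) := by
      intro i _ j _ hij
      rw [Finset.disjoint_left]
      intro e hei hej
      simp only [hA, Finset.mem_filter] at hei hej
      obtain ⟨he, hve, hi⟩ := hei
      obtain ⟨-, -, hj⟩ := hej
      obtain ⟨w, hw, hwv⟩ := hwit e he hve
      exact hij ((hi w hw hwv).symm.trans (hj w hw hwv))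
    have hsum : ∑ i : Fin t, (A i).card ≤ Δ := by
      rw [← Finset.card_biUnion hdisj]
      have hsub : (Finset.univ.biUnion A) ⊆ E.filter (fun e => v ∈ e) := by
        intro e he
        simp only [Finset.mem_biUnion, hA, Finset.mem_filter] at he ⊢
        obtain ⟨i, -, he, hve, -⟩ := he
        exact ⟨he, hve⟩
      calc (Finset.univ.biUnion A).card ≤ (E.filter (fun e => v ∈ e)).card :=
            Finset.card_le_card hsub
        _ ≤ Δ := by
              rw [hΔ]
              exact Finset.le_sup (f := fun v => (E.filter (fun e => v ∈ e)).card)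
                (Finset.mem_univ v)
    have hex : ∃ i : Fin t, (A i).card ≤ k := by
      by_contra hno
      push_neg at hno
      have : ∑ i : Fin t, (k + 1) ≤ ∑ i : Fin t, (A i).card :=
        Finset.sum_le_sum (fun i _ => hno i)
      simp only [Finset.sum_const, Finset.card_univ, Fintype.card_fin, smul_eq_mul] at this
      have hmul : t * k < t * (k + 1) := by rw [Nat.mul_succ]; omega
      omega
    obtain ⟨i, hci⟩ := hex
    set g : V → Fin t := Function.update f v i with hg
    have split : ∀ h : V → Fin t,
        Φ h = ((E.filter (fun e => ∀ a ∈ e, ∀ b ∈ e, h a = h b)).filter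
                (fun e => v ∈ e)).card
            + ((E.filter (fun e => ∀ a ∈ e, ∀ b ∈ e, h a = h b)).filter
                (fun e => ¬ v ∈ e)).card := by
      intro h
      rw [hΦ]
      exact (Finset.card_filter_add_card_filter_not (p := fun e => v ∈ e)).symm
    -- edges not containing v are unaffected by the move
    have eq1 : (E.filter (fun e => ∀ a ∈ e, ∀ b ∈ e, g a = g b)).filter (fun e => ¬ v ∈ e)
        = (E.filter (fun e => ∀ a ∈ e, ∀ b ∈ e, f a = f b)).filter (fun e => ¬ v ∈ e) := by
      ext e
      simp only [Finset.mem_filter]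
      constructor
      · rintro ⟨⟨he, hmono⟩, hve⟩
        have hupd : ∀ w ∈ e, g w = f w := fun w hw =>
          Function.update_of_ne (fun (hwv : w = v) => hve (hwv ▸ hw)) i f
        exact ⟨⟨he, fun a ha b hb => by
          rw [← hupd a ha, ← hupd b hb]; exact hmono a ha b hb⟩, hve⟩
      · rintro ⟨⟨he, hmono⟩, hve⟩
        have hupd : ∀ w ∈ e, g w = f w := fun w hw =>
          Function.update_of_ne (fun (hwv : w = v) => hve (hwv ▸ hw)) i f
        exact ⟨⟨he, fun a ha b hb => by
          rw [hupd a ha, hupd b hb]; exact hmono a ha b hb⟩, hve⟩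
    -- monochromatic edges through v, for f
    have eq2 : (E.filter (fun e => ∀ a ∈ e, ∀ b ∈ e, f a = f b)).filter (fun e => v ∈ e)
        = E.filter (fun e => v ∈ e ∧ ∀ w ∈ e, f w = f v) := by
      ext e
      simp only [Finset.mem_filter]
      constructor
      · rintro ⟨⟨he, hmono⟩, hve⟩
        exact ⟨he, hve, fun w hw => hmono w hw v hve⟩
      · rintro ⟨he, hve, hall⟩
        exact ⟨⟨he, fun a ha b hb => (hall a ha).trans (hall b hb).symm⟩, hve⟩
    -- monochromatic edges through v, for g
    have eq3 : (E.filter (fun e => ∀ a ∈ e, ∀ b ∈ e, g a = g b)).filter (fun e => v ∈ e)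
        = A i := by
      ext e
      simp only [hA, Finset.mem_filter]
      constructor
      · rintro ⟨⟨he, hmono⟩, hve⟩
        refine ⟨he, hve, fun w hw hwv => ?_⟩
        have : g w = g v := hmono w hw v hve
        rwa [hg, Function.update_of_ne hwv, Function.update_self] at this
      · rintro ⟨he, hve, hall⟩
        refine ⟨⟨he, fun a ha b hb => ?_⟩, hve⟩
        have key : ∀ w ∈ e, g w = i := by
          intro w hw
          by_cases hwv : w = v
          · rw [hwv, hg, Function.update_self]
          · rw [hg, Function.update_of_ne hwv]; exact hall w hw hwv
        rw [key a ha, key b hb]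
    have hlt : Φ g < Φ f := by
      rw [split g, split f, eq1, eq2, eq3]
      exact Nat.add_lt_add_right (lt_of_le_of_lt hci hv) _
    exact absurd (hf g (Finset.mem_univ g)) (not_le.mpr hlt)
  -- pick the largest color class
  set n : ℕ := Fintype.card V with hndef
  have hfib : ∑ i : Fin t, ((Finset.univ : Finset V).filter (fun v => f v = i)).card = n := by
    rw [hndef, ← Finset.card_univ]
    exact (Finset.card_eq_sum_card_fiberwise (fun v _ => Finset.mem_univ (f v))).symm
  have hex : ∃ i : Fin t, n ≤ t * ((Finset.univ : Finset V).filter (fun v => f v = i)).card := by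
    by_contra hno
    push_neg at hno
    have h1 : ∑ i : Fin t, t * ((Finset.univ : Finset V).filter (fun v => f v = i)).card
        < ∑ _i : Fin t, n := by
      apply Finset.sum_lt_sum_of_nonempty Finset.univ_nonempty
      intro i _
      exact hno i
    rw [← Finset.mul_sum, hfib] at h1
    simp only [Finset.sum_const, Finset.card_univ, Fintype.card_fin, smul_eq_mul] at h1
    omega
  obtain ⟨i, hi⟩ := hex
  set S : Finset V := (Finset.univ : Finset V).filter (fun v => f v = i) with hS
  -- S is k-independent
  have hSind : ∀ v ∈ S, (E.filter (fun e => v ∈ e ∧ e ⊆ S)).card ≤ k := by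
    intro v hv
    have hfv : f v = i := (Finset.mem_filter.mp hv).2
    refine le_trans (Finset.card_le_card ?_) (hkey v)
    intro e he
    simp only [Finset.mem_filter] at he ⊢
    obtain ⟨he, hve, hsub⟩ := he
    refine ⟨he, hve, fun w hw => ?_⟩
    have : f w = i := (Finset.mem_filter.mp (hsub hw)).2
    rw [this, hfv]
  have halpha : S.card ≤ alphak E k := by
    unfold alphak
    refine le_trans (le_of_eq ?_) (Finset.le_sup
      (f := fun S : Finset V =>
        if ∀ v ∈ S, (E.filter (fun e => v ∈ e ∧ e ⊆ S)).card ≤ k then S.card else 0)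
      (Finset.mem_univ S))
    exact (if_pos hSind).symm
  -- conclude
  have htR : (0:ℝ) < (t:ℝ) := by exact_mod_cast ht0
  have hTt : ((T : ℤ) : ℝ) = (t : ℝ) := by exact_mod_cast htT.symm
  rw [ge_iff_le, hTt, div_le_iff₀ htR]
  have : (n : ℝ) ≤ (alphak E k : ℝ) * (t : ℝ) := by
    have h1 : n ≤ t * S.card := hi
    have h2 : t * S.card ≤ t * alphak E k := Nat.mul_le_mul_left t halpha
    have : n ≤ alphak E k * t := by rw [Nat.mul_comm]; exact le_trans h1 h2
    exact_mod_cast this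
  exact_mod_cast this
end

section
/- The function f(x) = (1/(1+x))·(1 + {x}(1−{x})/((⌊x⌋+1)(⌊x⌋+2))) is continuous on the interval [0, ∞). -/
/-- `f(x) = (1/(1+x)) · (1 + {x}(1−{x}) / ((⌊x⌋+1)(⌊x⌋+2)))`, where `⌊x⌋` is the floor of
`x` and `{x} = x − ⌊x⌋` is the fractional part of `x`. -/
noncomputable def f (x : ℝ) : ℝ :=
  (1 / (1 + x)) *
    (1 + Int.fract x * (1 - Int.fract x) / (((⌊x⌋ : ℝ) + 1) * ((⌊x⌋ : ℝ) + 2)))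

/-!
On `[0, ∞)`, `f` is the piecewise linear interpolation of `x ↦ 1 / (1 + x)` at the integers:
with `x = n + t`, `(1 + x) ((1 - t) / (n + 1) + t / (n + 2)) = 1 + t (1 - t) / ((n + 1) (n + 2))`.
Such an interpolation is continuous because the linear pieces on `[n - 1, n]` and `[n, n + 1]`
agree at the node `n`.
-/

open Filter Topology AffineMap

section IntInterpolation

variable {V P : Type*} [AddCommGroup V] [Module ℝ V] [AddTorsor V P]

noncomputable def intInterpolation (a : ℤ → P) (x : ℝ) : P :=
  lineMap (a ⌊x⌋) (a (⌊x⌋ + 1)) (Int.fract x)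

theorem lineMap_sub_eq_intInterpolation (a : ℤ → P) {n : ℤ} {x : ℝ} (hnx : n ≤ x)
    (hxn : x ≤ n + 1) : lineMap (a n) (a (n + 1)) (x - n) = intInterpolation a x := by
  rcases hxn.lt_or_eq with hlt | rfl
  · have hfloor : ⌊x⌋ = n := Int.floor_eq_iff.mpr ⟨hnx, hlt⟩
    simp [intInterpolation, Int.fract, hfloor]
  · have hfloor : ⌊(n : ℝ) + 1⌋ = n + 1 := by exact_mod_cast Int.floor_intCast (n + 1)
    simp [intInterpolation, hfloor]

variable [TopologicalSpace V] [ContinuousSMul ℝ V] [TopologicalSpace P] [IsTopologicalAddTorsor P]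

theorem continuous_intInterpolation (a : ℤ → P) : Continuous (intInterpolation a) := by
  refine continuous_iff_continuousAt.mpr fun x ↦ continuousAt_iff_continuous_left'_right'.mpr ?_
  have piece {m : ℤ} {s : Set ℝ} (hm : m ≤ x ∧ x ≤ m + 1)
      (hfloor : Tendsto Int.floor (𝓝[s] x) (pure m)) :
      ContinuousWithinAt (intInterpolation a) s x := by
    have hline : Continuous fun y : ℝ ↦ lineMap (a m) (a (m + 1)) (y - m) :=
      lineMap_continuous.comp (continuous_sub_right _)
    refine hline.continuousWithinAt.congr_of_eventuallyEq ?_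
      (lineMap_sub_eq_intInterpolation a hm.1 hm.2).symm
    filter_upwards [tendsto_pure.mp hfloor] with y hy
    rw [← hy]
    exact (lineMap_sub_eq_intInterpolation a (Int.floor_le y) (Int.lt_floor_add_one y).le).symm
  constructor
  · refine piece ⟨?_, ?_⟩ (tendsto_floor_left_pure_ceil_sub_one x) <;> push_cast
    · linarith [Int.ceil_lt_add_one x]
    · linarith [Int.le_ceil x]
  · exact piece ⟨Int.floor_le x, (Int.lt_floor_add_one x).le⟩
      ((tendsto_floor_right_pure_floor x).mono_left (nhdsWithin_mono _ Set.Ioi_subset_Ici_self))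

end IntInterpolation

theorem f_eq_intInterpolation {x : ℝ} (hx : 0 ≤ x) :
    f x = intInterpolation (fun n : ℤ ↦ 1 / ((n : ℝ) + 1)) x := by
  have hn : (0 : ℝ) ≤ ⌊x⌋ := by exact_mod_cast Int.floor_nonneg.mpr hx
  have hx' := Int.floor_add_fract x
  simp only [f, intInterpolation, lineMap_apply_ring', Int.cast_add, Int.cast_one]
  generalize (⌊x⌋ : ℝ) = n at *
  generalize Int.fract x = t at *
  subst hx'
  have h1 : 1 + (n + t) ≠ 0 := by positivity
  have h2 : n + 1 ≠ 0 := by positivity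
  have h3 : n + 1 + 1 ≠ 0 := by positivity
  field_simp
  ring

/-- The function `f` is continuous on the interval `[0, ∞)`. -/
theorem f_continuousOn : ContinuousOn f (Set.Ici (0 : ℝ)) :=
  (continuous_intInterpolation _).continuousOn.congr fun _ hx ↦ f_eq_intInterpolation hx
end

section
/- The function f(x) = (1/(1+x))·(1 + {x}(1−{x})/((⌊x⌋+1)(⌊x⌋+2))) is monotonically decreasing on the interval [0, ∞), i.e., for all 0 ≤ x ≤ y we have f(y) ≤ f(x). -/
lemma f_eq (x : ℝ) (hx : 0 ≤ x) :
    f x = ((⌊x⌋ : ℝ) + 2 - Int.fract x) / ((((⌊x⌋ : ℝ) + 1)) * (((⌊x⌋ : ℝ) + 2))) := by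
  have hn : (0 : ℝ) ≤ (⌊x⌋ : ℝ) := by exact_mod_cast Int.floor_nonneg.mpr hx
  have h1 : (0:ℝ) < (⌊x⌋ : ℝ) + 1 := by linarith
  have h2 : (0:ℝ) < (⌊x⌋ : ℝ) + 2 := by linarith
  have hxx : (0:ℝ) < 1 + x := by linarith
  have key : ∀ n t : ℝ, 0 ≤ n → 0 ≤ t → t < 1 →
      (1 / (1 + (n + t))) * (1 + t * (1 - t) / ((n + 1) * (n + 2)))
        = (n + 2 - t) / ((n + 1) * (n + 2)) := by
    intro n t hn0 ht0 ht1
    have : (0:ℝ) < 1 + (n + t) := by linarith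
    field_simp
    ring
  unfold f
  have h : (1:ℝ) + x = 1 + ((⌊x⌋ : ℝ) + Int.fract x) := by rw [Int.floor_add_fract]
  rw [h, key _ _ hn (Int.fract_nonneg x) (Int.fract_lt_one x)]

lemma f_bounds (x : ℝ) (hx : 0 ≤ x) :
    1 / ((⌊x⌋ : ℝ) + 2) ≤ f x ∧ f x ≤ 1 / ((⌊x⌋ : ℝ) + 1) := by
  have hn : (0 : ℝ) ≤ (⌊x⌋ : ℝ) := by exact_mod_cast Int.floor_nonneg.mpr hx
  have h1 : (0:ℝ) < (⌊x⌋ : ℝ) + 1 := by linarith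
  have h2 : (0:ℝ) < (⌊x⌋ : ℝ) + 2 := by linarith
  have hf0 : 0 ≤ Int.fract x := Int.fract_nonneg x
  have hf1 : Int.fract x < 1 := Int.fract_lt_one x
  rw [f_eq x hx]
  constructor
  · rw [div_le_div_iff₀ h2 (by positivity)]
    nlinarith
  · rw [div_le_div_iff₀ (by positivity) h1]
    nlinarith

/-- The function `f` is monotonically decreasing on `[0, ∞)`:
for all `0 ≤ x ≤ y` we have `f(y) ≤ f(x)`. -/
theorem f_antitoneOn : ∀ x y : ℝ, 0 ≤ x → x ≤ y → f y ≤ f x := by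
  intro x y hx hxy
  have hy : 0 ≤ y := le_trans hx hxy
  have hfl : ⌊x⌋ ≤ ⌊y⌋ := Int.floor_le_floor hxy
  have hnx : (0 : ℝ) ≤ (⌊x⌋ : ℝ) := by exact_mod_cast Int.floor_nonneg.mpr hx
  rcases eq_or_lt_of_le hfl with heq | hlt
  · -- same floor
    rw [f_eq x hx, f_eq y hy, ← heq]
    have hfr : Int.fract x ≤ Int.fract y := by
      have : Int.fract x = x - (⌊x⌋ : ℝ) := rfl
      have hy' : Int.fract y = y - (⌊y⌋ : ℝ) := rfl
      rw [this, hy', ← heq]; linarith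
    apply div_le_div_of_nonneg_right ?_ (by positivity) |>.trans_eq rfl
    · linarith
  · -- floor x < floor y
    have h1 : (⌊x⌋ : ℝ) + 2 ≤ (⌊y⌋ : ℝ) + 1 := by
      have : ⌊x⌋ + 1 ≤ ⌊y⌋ := hlt
      have : ((⌊x⌋ : ℝ)) + 1 ≤ (⌊y⌋ : ℝ) := by exact_mod_cast this
      linarith
    calc f y ≤ 1 / ((⌊y⌋ : ℝ) + 1) := (f_bounds y hy).2
      _ ≤ 1 / ((⌊x⌋ : ℝ) + 2) := by
          apply one_div_le_one_div_of_le (by linarith) h1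
      _ ≤ f x := (f_bounds x hx).1
end

section
/- The function f(x) = (1/(1+x))·(1 + {x}(1−{x})/((⌊x⌋+1)(⌊x⌋+2))) is convex on the interval [0, ∞). -/
/-- The chord of `1/(1+x)` between integer points `k` and `k+1`. -/
noncomputable def L (k : ℤ) (x : ℝ) : ℝ :=
  (2 * (k : ℝ) + 2 - x) / (((k : ℝ) + 1) * ((k : ℝ) + 2))

lemma aux_alg (n t x : ℝ) (hx : x = n + t) (h3 : 0 < 1 + x) (h1 : 0 < n + 1)
    (h2 : 0 < n + 2) :
    (1 / (1 + x)) * (1 + t * (1 - t) / ((n + 1) * (n + 2)))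
      = (2 * n + 2 - x) / ((n + 1) * (n + 2)) := by
  subst hx
  field_simp
  ring

lemma f_eq_L {x : ℝ} (hx : 0 ≤ x) : f x = L ⌊x⌋ x := by
  have hn : (0 : ℤ) ≤ ⌊x⌋ := Int.floor_nonneg.mpr hx
  have hn' : (0 : ℝ) ≤ (⌊x⌋ : ℝ) := by exact_mod_cast hn
  have h1 : (⌊x⌋ : ℝ) + 1 > 0 := by linarith
  have h2 : (⌊x⌋ : ℝ) + 2 > 0 := by linarith
  have h3 : (1 : ℝ) + x > 0 := by linarith
  unfold f L
  exact aux_alg _ _ _ (Int.floor_add_fract x).symm h3 h1 h2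

lemma L_le_f {x : ℝ} (hx : 0 ≤ x) (k : ℤ) (hk : 0 ≤ k) : L k x ≤ f x := by
  rw [f_eq_L hx]
  set n : ℤ := ⌊x⌋ with hndef
  have hn : (0 : ℤ) ≤ n := Int.floor_nonneg.mpr hx
  have hn' : (0 : ℝ) ≤ (n : ℝ) := by exact_mod_cast hn
  have hk' : (0 : ℝ) ≤ (k : ℝ) := by exact_mod_cast hk
  have hxl : (n : ℝ) ≤ x := Int.floor_le x
  have hxu : x ≤ (n : ℝ) + 1 := le_of_lt (Int.lt_floor_add_one x)
  -- the two endpoint nonnegativity facts (integrality)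
  have e1 : (0 : ℤ) ≤ (k - n) * (k - n + 1) := by
    rcases le_or_gt n k with h | h
    · have : (0:ℤ) ≤ k - n := by omega
      exact mul_nonneg this (by omega)
    · have h1 : k - n ≤ 0 := by omega
      have h2 : k - n + 1 ≤ 0 := by omega
      nlinarith
  have e2 : (0 : ℤ) ≤ (k - n) * (k - n - 1) := by
    rcases le_or_gt k n with h | h
    · have h1 : k - n ≤ 0 := by omega
      have h2 : k - n - 1 ≤ 0 := by omega
      nlinarith
    · have : (0:ℤ) ≤ k - n := by omega
      exact mul_nonneg this (by omega)
  have e1' : (0 : ℝ) ≤ ((k : ℝ) - n) * ((k : ℝ) - n + 1) := by exact_mod_cast e1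
  have e2' : (0 : ℝ) ≤ ((k : ℝ) - n) * ((k : ℝ) - n - 1) := by exact_mod_cast e2
  have hk1 : (0 : ℝ) < (k : ℝ) + 1 := by linarith
  have hk2 : (0 : ℝ) < (k : ℝ) + 2 := by linarith
  have hn1 : (0 : ℝ) < (n : ℝ) + 1 := by linarith
  have hn2 : (0 : ℝ) < (n : ℝ) + 2 := by linarith
  unfold L
  rw [div_le_div_iff₀ (by positivity) (by positivity)]
  nlinarith [mul_nonneg (mul_nonneg (sub_nonneg.mpr hxl) e2') hn1.le,
             mul_nonneg (mul_nonneg (sub_nonneg.mpr hxu) e1') hn2.le,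
             mul_pos hn1 hn2, mul_pos hk1 hk2]

/-- The function `f` is convex on the interval `[0, ∞)`. -/
theorem f_convexOn : ConvexOn ℝ (Set.Ici (0 : ℝ)) f := by
  refine ⟨convex_Ici 0, ?_⟩
  intro x hx y hy a b ha hb hab
  simp only [smul_eq_mul]
  set z : ℝ := a * x + b * y with hz
  have hxx : (0:ℝ) ≤ x := hx
  have hyy : (0:ℝ) ≤ y := hy
  have hz0 : 0 ≤ z := by positivity
  have hk : (0 : ℤ) ≤ ⌊z⌋ := Int.floor_nonneg.mpr hz0
  have hfz : f z = L ⌊z⌋ z := f_eq_L hz0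
  have hLz : L ⌊z⌋ z = a * L ⌊z⌋ x + b * L ⌊z⌋ y := by
    unfold L
    have hk1 : ((⌊z⌋ : ℝ) + 1) > 0 := by
      have : (0:ℝ) ≤ (⌊z⌋ : ℝ) := by exact_mod_cast hk
      linarith
    have hk2 : ((⌊z⌋ : ℝ) + 2) > 0 := by linarith [hk1]
    field_simp
    nlinarith [hab, sq_nonneg ((⌊z⌋:ℝ))]
  have h1 : L ⌊z⌋ x ≤ f x := L_le_f hxx ⌊z⌋ hk
  have h2 : L ⌊z⌋ y ≤ f y := L_le_f hyy ⌊z⌋ hk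
  calc f z = a * L ⌊z⌋ x + b * L ⌊z⌋ y := by rw [hfz, hLz]
    _ ≤ a * f x + b * f y := by
        gcongr
end

section
/- Let k ≥ 0 be an integer. If H is an s-uniform hypergraph (s ≥ 2) of order n with e edges, then α_k(H) ≥ n − e/(k+1). -/
lemma alphak_key {V : Type*} [Fintype V] [DecidableEq V]
    (E : Finset (Finset V)) (k : ℕ) (S : Finset V) :
    ∃ T ⊆ S, (∀ v ∈ T, (E.filter (fun e => v ∈ e ∧ e ⊆ T)).card ≤ k) ∧
      (S.card : ℝ) - ((E.filter (fun e => e ⊆ S)).card : ℝ) / ((k : ℝ) + 1) ≤ T.card := by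
  induction S using Finset.strongInductionOn with
  | _ S ih =>
    by_cases h : ∀ v ∈ S, (E.filter (fun e => v ∈ e ∧ e ⊆ S)).card ≤ k
    · refine ⟨S, subset_rfl, h, ?_⟩
      have : (0:ℝ) ≤ ((E.filter (fun e => e ⊆ S)).card : ℝ) / ((k : ℝ) + 1) := by positivity
      linarith
    · push_neg at h
      obtain ⟨v, hvS, hv⟩ := h
      obtain ⟨T, hTsub, hTgood, hTcard⟩ := ih (S.erase v) (Finset.erase_ssubset hvS)
      refine ⟨T, hTsub.trans (Finset.erase_subset v S), hTgood, ?_⟩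
      set A := E.filter (fun e => e ⊆ S) with hA
      set B := E.filter (fun e => v ∈ e ∧ e ⊆ S) with hB
      have hBA : B ⊆ A := by
        intro e he
        simp only [hA, hB, Finset.mem_filter] at *
        exact ⟨he.1, he.2.2⟩
      have hsub : E.filter (fun e => e ⊆ S.erase v) ⊆ A \ B := by
        intro e he
        simp only [hA, hB, Finset.mem_filter, Finset.mem_sdiff] at *
        obtain ⟨heE, hes⟩ := he
        have heS : e ⊆ S := hes.trans (Finset.erase_subset v S)
        refine ⟨⟨heE, heS⟩, ?_⟩
        rintro ⟨-, hve, -⟩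
        exact (Finset.mem_erase.1 (hes hve)).1 rfl
      have hcard : (E.filter (fun e => e ⊆ S.erase v)).card + B.card ≤ A.card := by
        have h1 : (E.filter (fun e => e ⊆ S.erase v)).card ≤ A.card - B.card := by
          calc _ ≤ (A \ B).card := Finset.card_le_card hsub
            _ = A.card - B.card := Finset.card_sdiff_of_subset hBA
        have h2 : B.card ≤ A.card := Finset.card_le_card hBA
        omega
      have hBk : (k : ℝ) + 1 ≤ (B.card : ℝ) := by exact_mod_cast hv
      have hcardR : ((E.filter (fun e => e ⊆ S.erase v)).card : ℝ) + ((k:ℝ)+1) ≤ A.card := by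
        have : ((E.filter (fun e => e ⊆ S.erase v)).card : ℝ) + B.card ≤ A.card := by
          exact_mod_cast hcard
        linarith
      have herase : ((S.erase v).card : ℝ) = (S.card : ℝ) - 1 := by
        rw [Finset.card_erase_of_mem hvS]
        have : 1 ≤ S.card := Finset.card_pos.2 ⟨v, hvS⟩
        push_cast [Nat.cast_sub this]
        ring
      have hpos : (0:ℝ) < (k:ℝ) + 1 := by positivity
      have hdiv := (div_le_div_iff_of_pos_right hpos).mpr hcardR
      rw [add_div, div_self hpos.ne'] at hdiv
      rw [herase] at hTcard
      linarith

/-- If `k ≥ 0` and `H` is an `s`-uniform hypergraph (`s ≥ 2`) of order `n` with `e` edges,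
then `α_k(H) ≥ n − e/(k+1)`. -/
theorem alphak_ge_card_sub_edges_div
    {V : Type*} [Fintype V] [DecidableEq V] (s k : ℕ) (hs : 2 ≤ s)
    (E : Finset (Finset V)) (hunif : ∀ e ∈ E, e.card = s) :
    (alphak E k : ℝ) ≥ (Fintype.card V : ℝ) - (E.card : ℝ) / ((k : ℝ) + 1) := by
  obtain ⟨T, -, hTgood, hTcard⟩ := alphak_key E k Finset.univ
  have hfilter : E.filter (fun e => e ⊆ (Finset.univ : Finset V)) = E := by
    apply Finset.filter_true_of_mem
    intro e _
    exact Finset.subset_univ e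
  rw [hfilter, Finset.card_univ] at hTcard
  have hle : T.card ≤ alphak E k := by
    unfold alphak
    calc T.card = if ∀ v ∈ T, (E.filter (fun e => v ∈ e ∧ e ⊆ T)).card ≤ k then T.card else 0 :=
          (if_pos hTgood).symm
      _ ≤ _ := Finset.le_sup (f := fun S : Finset V =>
          if ∀ v ∈ S, (E.filter (fun e => v ∈ e ∧ e ⊆ S)).card ≤ k then S.card else 0)
          (Finset.mem_univ T)
  have : (T.card : ℝ) ≤ (alphak E k : ℝ) := by exact_mod_cast hle
  linarith
end

section
/- Let k ≥ 0 and r ≥ 0 be integers, and let H be an s-uniform hypergraph (s ≥ 2) of order n ≥ 1 with e edges and average degree d = s·e/n. If (s/2)·r·(k+1) < d ≤ (s/2)·(r+1)·(k+1) and α_k(H) ≥ (2/(r+2))·(n − e/((r+1)(k+1))), then α_k(H) ≥ f(2d/(s(k+1)))·n. -/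
/-- Let `k ≥ 0`, `r ≥ 0` be integers and `H` an `s`-uniform hypergraph (`s ≥ 2`) of order
`n ≥ 1` with `e` edges and average degree `d = s·e/n`. If
`(s/2)·r·(k+1) < d ≤ (s/2)·(r+1)·(k+1)` and
`α_k(H) ≥ (2/(r+2))·(n − e/((r+1)(k+1)))`, then `α_k(H) ≥ f(2d/(s(k+1)))·n`. -/
theorem alphak_ge_f_of_sandwich
    {V : Type*} [Fintype V] [DecidableEq V] (s k r : ℕ) (hs : 2 ≤ s)
    (E : Finset (Finset V)) (hunif : ∀ e ∈ E, e.card = s)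
    (hn : 1 ≤ Fintype.card V)
    (d : ℝ) (hd : d = (s : ℝ) * (E.card : ℝ) / (Fintype.card V : ℝ))
    (h1 : (s : ℝ) / 2 * (r : ℝ) * ((k : ℝ) + 1) < d)
    (h2 : d ≤ (s : ℝ) / 2 * ((r : ℝ) + 1) * ((k : ℝ) + 1))
    (h3 : (alphak E k : ℝ) ≥
      2 / ((r : ℝ) + 2) *
        ((Fintype.card V : ℝ) - (E.card : ℝ) / (((r : ℝ) + 1) * ((k : ℝ) + 1)))) :
    (alphak E k : ℝ) ≥ f (2 * d / ((s : ℝ) * ((k : ℝ) + 1))) * (Fintype.card V : ℝ) := by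
  set n : ℝ := (Fintype.card V : ℝ) with hnn
  set e : ℝ := (E.card : ℝ) with hee
  have hn' : (0:ℝ) < n := by rw [hnn]; exact_mod_cast hn
  have hs' : (0:ℝ) < (s:ℝ) := by exact_mod_cast (by omega : 0 < s)
  have hk' : (0:ℝ) < (k:ℝ) + 1 := by positivity
  set x : ℝ := 2 * d / ((s:ℝ) * ((k:ℝ) + 1)) with hx
  have hxe : x * ((k:ℝ)+1) * n = 2 * e := by
    rw [hx, hd]; field_simp
  have hr1 : (r:ℝ) < x := by
    rw [hx, lt_div_iff₀ (by positivity)]; nlinarith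
  have hr2 : x ≤ (r:ℝ) + 1 := by
    rw [hx, div_le_iff₀ (by positivity)]; nlinarith
  have hr0 : (0:ℝ) ≤ (r:ℝ) := by positivity
  have h1x : (0:ℝ) < 1 + x := by linarith
  have key : f x * n = 2 / ((r:ℝ) + 2) * (n - e / (((r:ℝ)+1) * ((k:ℝ)+1))) := by
    have he : e = x * ((k:ℝ)+1) * n / 2 := by linarith
    rcases lt_or_eq_of_le hr2 with hlt | heq
    · have hfl : ⌊x⌋ = (r : ℤ) := by
        rw [Int.floor_eq_iff]
        constructor
        · push_cast; linarith
        · push_cast; linarith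
      have hfr : Int.fract x = x - (r:ℝ) := by
        rw [Int.fract, hfl]; push_cast; ring
      rw [f, hfl, hfr, he]
      push_cast
      field_simp
      ring
    · have hfl : ⌊x⌋ = (r : ℤ) + 1 := by
        rw [Int.floor_eq_iff]
        constructor
        · push_cast; linarith
        · push_cast; linarith
      have hfr : Int.fract x = 0 := by
        rw [Int.fract, hfl]; push_cast; linarith
      rw [f, hfl, hfr, he, heq]
      push_cast
      field_simp
      ring
  linarith [h3]
end

section
/- Let k ≥ 0 be an integer. If H is an s-uniform hypergraph (s ≥ 2) of order n ≥ 1 with average degree d satisfying 0 < d ≤ (s/2)·(k+1), then α_k(H) ≥ f(2d/(s(k+1)))·n. -/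
lemma f_eq_s10 (x : ℝ) (h0 : 0 < x) (h1 : x ≤ 1) : f x = 1 - x / 2 := by
  rcases eq_or_lt_of_le h1 with h | h
  · subst h
    simp [f, Int.fract_one]
    norm_num
  · have hfl : ⌊x⌋ = 0 := Int.floor_eq_zero_iff.2 ⟨h0.le, h⟩
    have hfr : Int.fract x = x := by
      rw [Int.fract, hfl]; simp
    rw [f, hfl, hfr]
    have : (1 : ℝ) + x ≠ 0 := by positivity
    field_simp
    ring

lemma exists_good {V : Type*} [Fintype V] [DecidableEq V]
    (E : Finset (Finset V)) (k : ℕ) (S : Finset V) :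
    ∃ T ⊆ S, (∀ v ∈ T, (E.filter (fun e => v ∈ e ∧ e ⊆ T)).card ≤ k) ∧
      (k+1) * S.card ≤ (k+1) * T.card + (E.filter (fun e => e ⊆ S)).card := by
  induction S using Finset.strongInduction with
  | _ S IH =>
    by_cases h : ∀ v ∈ S, (E.filter (fun e => v ∈ e ∧ e ⊆ S)).card ≤ k
    · exact ⟨S, le_refl _, h, by omega⟩
    · push_neg at h
      obtain ⟨v, hvS, hv⟩ := h
      obtain ⟨T, hTS, hTind, hcard⟩ := IH (S.erase v) (Finset.erase_ssubset hvS)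
      refine ⟨T, hTS.trans (Finset.erase_subset _ _), hTind, ?_⟩
      have hScard : S.card = (S.erase v).card + 1 := by
        rw [Finset.card_erase_of_mem hvS]
        have := Finset.card_pos.2 ⟨v, hvS⟩
        omega
      have hdisj : Disjoint (E.filter (fun e => e ⊆ S.erase v))
          (E.filter (fun e => v ∈ e ∧ e ⊆ S)) := by
        rw [Finset.disjoint_filter]
        intro e _ he hve
        exact (Finset.notMem_erase v S) (he hve.1)
      have hsub : (E.filter (fun e => e ⊆ S.erase v)) ∪
          (E.filter (fun e => v ∈ e ∧ e ⊆ S)) ⊆ E.filter (fun e => e ⊆ S) := by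
        intro e he
        rcases Finset.mem_union.1 he with he | he
        · rw [Finset.mem_filter] at he ⊢
          exact ⟨he.1, he.2.trans (Finset.erase_subset _ _)⟩
        · rw [Finset.mem_filter] at he ⊢
          exact ⟨he.1, he.2.2⟩
      have hcards : (E.filter (fun e => e ⊆ S.erase v)).card
          + (E.filter (fun e => v ∈ e ∧ e ⊆ S)).card ≤ (E.filter (fun e => e ⊆ S)).card := by
        rw [← Finset.card_union_of_disjoint hdisj]
        exact Finset.card_le_card hsub
      have hmul : (k+1) * S.card = (k+1) * (S.erase v).card + (k+1) := by
        rw [hScard]; ring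
      omega

set_option maxHeartbeats 1000000

/-- Let `k ≥ 0` be an integer. If `H` is an `s`-uniform hypergraph (`s ≥ 2`) of order
`n ≥ 1` with average degree `d` satisfying `0 < d ≤ (s/2)·(k+1)`, then
`α_k(H) ≥ f(2d/(s(k+1)))·n`. -/
theorem alphak_ge_f_of_small_avg_degree
    {V : Type*} [Fintype V] [DecidableEq V] (s k : ℕ) (hs : 2 ≤ s)
    (E : Finset (Finset V)) (hunif : ∀ e ∈ E, e.card = s)
    (hn : 1 ≤ Fintype.card V)
    (d : ℝ) (hd : d = (s : ℝ) * (E.card : ℝ) / (Fintype.card V : ℝ))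
    (h1 : 0 < d) (h2 : d ≤ (s : ℝ) / 2 * ((k : ℝ) + 1)) :
    (alphak E k : ℝ) ≥ f (2 * d / ((s : ℝ) * ((k : ℝ) + 1))) * (Fintype.card V : ℝ) := by
  classical
  set n := Fintype.card V with hn'
  set x := 2 * d / ((s : ℝ) * ((k : ℝ) + 1)) with hx
  have hs0 : (0:ℝ) < (s:ℝ) := by positivity
  have hk0 : (0:ℝ) < (k:ℝ) + 1 := by positivity
  have hx0 : 0 < x := by positivity
  have hx1 : x ≤ 1 := by
    rw [hx, div_le_one (by positivity)]
    nlinarith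
  rw [f_eq_s10 x hx0 hx1]
  obtain ⟨T, _, hTind, hcard⟩ := exists_good E k (Finset.univ : Finset V)
  have halpha : T.card ≤ alphak E k := by
    unfold alphak
    have := Finset.le_sup (f := fun S => if ∀ v ∈ S,
        (E.filter (fun e => v ∈ e ∧ e ⊆ S)).card ≤ k then S.card else 0)
      (Finset.mem_univ T)
    rwa [if_pos hTind] at this
  have hE : ∀ e ∈ E.filter (fun e => e ⊆ (Finset.univ : Finset V)), True := fun _ _ => trivial
  have hfe : (E.filter (fun e => e ⊆ (Finset.univ : Finset V))) = E := by
    apply Finset.filter_true_of_mem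
    intro e _
    exact Finset.subset_univ e
  rw [hfe, Finset.card_univ] at hcard
  -- hcard : (k+1) * n ≤ (k+1) * T.card + E.card
  have hnpos : (0:ℝ) < (n:ℝ) := by exact_mod_cast Nat.lt_of_lt_of_le Nat.zero_lt_one hn
  have hdn : d * (n:ℝ) = (s:ℝ) * (E.card:ℝ) := by
    rw [hd]
    field_simp
  have hcardR : ((k:ℝ)+1) * (n:ℝ) ≤ ((k:ℝ)+1) * (T.card:ℝ) + (E.card:ℝ) := by
    exact_mod_cast hcard
  have hTle : (T.card : ℝ) ≤ (alphak E k : ℝ) := by exact_mod_cast halpha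
  have hxn : x * (n:ℝ) / 2 = (E.card:ℝ) / ((k:ℝ)+1) := by
    rw [hx]
    field_simp
    nlinarith [hdn]
  have : (1 - x/2) * (n:ℝ) = (n:ℝ) - (E.card:ℝ)/((k:ℝ)+1) := by
    nlinarith [hxn]
  rw [ge_iff_le, this, sub_le_iff_le_add]
  have hq : (E.card:ℝ)/((k:ℝ)+1) * ((k:ℝ)+1) = (E.card:ℝ) := div_mul_cancel₀ _ (ne_of_gt hk0)
  nlinarith [hTle, hcardR, hq, hk0]
end

section
/- Let k ≥ 0 be an integer. For any s-uniform hypergraph H (s ≥ 2) of order n ≥ 1 with average degree d, we have α_k(H) ≥ f(2d/(s(k+1)))·n. -/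
open Finset

noncomputable def Lf (m : ℕ) (x : ℝ) : ℝ :=
  (2 * ((m : ℝ) + 1) - x) / (((m : ℝ) + 1) * ((m : ℝ) + 2))

private lemma helperfL (M F : ℝ) (hM : 0 ≤ M) (hF0 : 0 ≤ F) (hF1 : F < 1) :
    (1/(1+(M+F))) * (1 + F*(1-F)/((M+1)*(M+2))) = (2*(M+1)-(M+F))/((M+1)*(M+2)) := by
  have h1 : (0:ℝ) < 1 + (M+F) := by linarith
  have h2 : (0:ℝ) < M+1 := by linarith
  have h3 : (0:ℝ) < M+2 := by linarith
  field_simp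
  ring

lemma floor_toNat_cast {x : ℝ} (hx : 0 ≤ x) : ((⌊x⌋.toNat : ℕ) : ℝ) = ((⌊x⌋ : ℝ)) := by
  norm_cast
  exact Int.toNat_of_nonneg (Int.floor_nonneg.2 hx)

lemma f_eq_Lf {x : ℝ} (hx : 0 ≤ x) : f x = Lf ⌊x⌋.toNat x := by
  have hM0 : (0:ℝ) ≤ (⌊x⌋ : ℝ) := by exact_mod_cast Int.floor_nonneg.2 hx
  have H := helperfL ((⌊x⌋ : ℝ)) (Int.fract x) hM0 (Int.fract_nonneg x) (Int.fract_lt_one x)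
  rw [Int.floor_add_fract] at H
  rw [f, Lf, floor_toNat_cast hx]
  exact H

lemma Lf_le_f {x : ℝ} (hx : 0 ≤ x) (m : ℕ) : Lf m x ≤ f x := by
  rw [f_eq_Lf hx]
  set b : ℕ := ⌊x⌋.toNat with hb
  have hbx : (b : ℝ) ≤ x := by
    rw [hb, floor_toNat_cast hx]; exact Int.floor_le x
  have hxb : x ≤ (b : ℝ) + 1 := by
    rw [hb, floor_toNat_cast hx]; exact le_of_lt (Int.lt_floor_add_one x)
  rw [Lf, Lf, div_le_div_iff₀ (by positivity) (by positivity)]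
  have P1 : (0:ℝ) ≤ ((m:ℝ) - b) * ((m:ℝ) - b - 1) := by
    rcases le_or_gt m b with h | h
    · have : ((m:ℝ)) ≤ (b:ℝ) := by exact_mod_cast h
      nlinarith
    · have : ((b:ℝ)) + 1 ≤ (m:ℝ) := by exact_mod_cast h
      nlinarith
  have P2 : (0:ℝ) ≤ ((m:ℝ) - b) * ((m:ℝ) - b + 1) := by
    rcases lt_trichotomy m b with h | h | h
    · have : ((m:ℝ)) + 1 ≤ (b:ℝ) := by exact_mod_cast h
      nlinarith
    · subst h; simp
    · have : ((b:ℝ)) + 1 ≤ (m:ℝ) := by exact_mod_cast h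
      nlinarith
  have t1 : (0:ℝ) ≤ ((b:ℝ) + 1 - x) * ((b:ℝ) + 2) := by nlinarith
  have t2 : (0:ℝ) ≤ (x - (b:ℝ)) * ((b:ℝ) + 1) := by nlinarith
  nlinarith [mul_nonneg t1 P2, mul_nonneg t2 P1]

lemma f_le {x : ℝ} (hx : 0 ≤ x) : f x ≤ 1 / ((⌊x⌋.toNat : ℝ) + 1) := by
  rw [f_eq_Lf hx]
  have hbx : ((⌊x⌋.toNat : ℕ) : ℝ) ≤ x := by
    rw [floor_toNat_cast hx]; exact Int.floor_le x
  rw [Lf, div_le_div_iff₀ (by positivity) (by positivity)]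
  nlinarith

section
variable {V : Type*} [Fintype V] [DecidableEq V]

def Indep (E : Finset (Finset V)) (k : ℕ) (S : Finset V) : Prop :=
  ∀ v ∈ S, (E.filter (fun e => v ∈ e ∧ e ⊆ S)).card ≤ k

lemma partition_lemma (k m : ℕ) (E : Finset (Finset V)) (W : Finset V)
    (hE : ∀ e ∈ E, e ⊆ W ∧ 2 ≤ e.card)
    (hdeg : ∀ v : V, (E.filter (fun e => v ∈ e)).card < (k+1)*(m+1)) :
    ∃ S : Finset V, S ⊆ W ∧ Indep E k S ∧ W.card ≤ (m+1) * S.card := by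
  obtain ⟨g, -, hg⟩ := Finset.exists_min_image (Finset.univ : Finset (V → Fin (m+1)))
    (fun g => (E.filter (fun e => ∀ u ∈ e, ∀ w ∈ e, g u = g w)).card)
    ⟨fun _ => ⟨0, Nat.succ_pos m⟩, mem_univ _⟩
  -- key: every vertex lies in at most k monochromatic edges
  have key : ∀ v : V,
      (E.filter (fun e => (∀ u ∈ e, ∀ w ∈ e, g u = g w) ∧ v ∈ e)).card ≤ k := by
    intro v
    set A : Fin (m+1) → Finset (Finset V) :=
      fun j => E.filter (fun e => v ∈ e ∧ ∀ u ∈ e, u ≠ v → g u = j) with hA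
    have hdisj : ∀ j₁ ∈ (Finset.univ : Finset (Fin (m+1))), ∀ j₂ ∈ Finset.univ,
        j₁ ≠ j₂ → Disjoint (A j₁) (A j₂) := by
      intro j₁ _ j₂ _ hne
      rw [Finset.disjoint_left]
      intro e he1 he2
      rw [hA, mem_filter] at he1 he2
      obtain ⟨heE, hv, h1⟩ := he1
      obtain ⟨-, -, h2⟩ := he2
      obtain ⟨u, hu, hune⟩ := Finset.exists_mem_ne
        (lt_of_lt_of_le one_lt_two (hE e heE).2) v
      exact hne ((h1 u hu hune).symm.trans (h2 u hu hune))
    have hsum : ∑ j : Fin (m+1), (A j).card ≤ (E.filter (fun e => v ∈ e)).card := by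
      rw [← Finset.card_biUnion hdisj]
      apply Finset.card_le_card
      intro e he
      rw [Finset.mem_biUnion] at he
      obtain ⟨j, -, hj⟩ := he
      rw [hA, mem_filter] at hj
      exact mem_filter.2 ⟨hj.1, hj.2.1⟩
    have hj : ∃ j : Fin (m+1), (A j).card ≤ k := by
      by_contra hcon
      push_neg at hcon
      have h2 : (m+1) * (k+1) ≤ ∑ j : Fin (m+1), (A j).card := by
        calc (m+1) * (k+1) = ∑ _j : Fin (m+1), (k+1) := by
              rw [Finset.sum_const, Finset.card_univ, Fintype.card_fin, smul_eq_mul]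
        _ ≤ ∑ j : Fin (m+1), (A j).card := Finset.sum_le_sum (fun j _ => hcon j)
      have h3 := hdeg v
      rw [Nat.mul_comm (k+1) (m+1)] at h3
      omega
    obtain ⟨j, hjk⟩ := hj
    set g' : V → Fin (m+1) := Function.update g v j with hg'
    have hsplit : ∀ h : V → Fin (m+1),
        (E.filter (fun e => ∀ u ∈ e, ∀ w ∈ e, h u = h w)).card
          = (E.filter (fun e => (∀ u ∈ e, ∀ w ∈ e, h u = h w) ∧ v ∈ e)).card
            + (E.filter (fun e => (∀ u ∈ e, ∀ w ∈ e, h u = h w) ∧ v ∉ e)).card := by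
      intro h
      rw [← Finset.filter_filter, ← Finset.filter_filter,
        Finset.card_filter_add_card_filter_not]
    have C2 : E.filter (fun e => (∀ u ∈ e, ∀ w ∈ e, g' u = g' w) ∧ v ∉ e)
        = E.filter (fun e => (∀ u ∈ e, ∀ w ∈ e, g u = g w) ∧ v ∉ e) := by
      apply Finset.filter_congr
      intro e _
      constructor
      · rintro ⟨hmono, hv⟩
        refine ⟨fun u hu w hw => ?_, hv⟩
        have h1 := hmono u hu w hw
        rwa [hg', Function.update_of_ne (by rintro rfl; exact hv hu),
          Function.update_of_ne (by rintro rfl; exact hv hw)] at h1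
      · rintro ⟨hmono, hv⟩
        refine ⟨fun u hu w hw => ?_, hv⟩
        rw [hg', Function.update_of_ne (by rintro rfl; exact hv hu),
          Function.update_of_ne (by rintro rfl; exact hv hw)]
        exact hmono u hu w hw
    have C3 : E.filter (fun e => (∀ u ∈ e, ∀ w ∈ e, g' u = g' w) ∧ v ∈ e) = A j := by
      rw [hA]
      apply Finset.filter_congr
      intro e _
      constructor
      · rintro ⟨hmono, hv⟩
        refine ⟨hv, fun u hu hune => ?_⟩
        have h1 := hmono u hu v hv
        rwa [hg', Function.update_of_ne hune, Function.update_self] at h1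
      · rintro ⟨hv, hcol⟩
        refine ⟨fun u hu w hw => ?_, hv⟩
        have hval : ∀ u ∈ e, g' u = j := by
          intro u hu
          rcases eq_or_ne u v with rfl | hune
          · rw [hg', Function.update_self]
          · rw [hg', Function.update_of_ne hune]
            exact hcol u hu hune
        rw [hval u hu, hval w hw]
    have hmin := hg g' (mem_univ g')
    rw [hsplit g, hsplit g', C2, C3] at hmin
    omega
  -- take the best color class
  have hfib : ∑ j : Fin (m+1), (W.filter (fun u => g u = j)).card = W.card :=
    (Finset.card_eq_sum_card_fiberwise (fun u _ => mem_univ (g u))).symm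
  have hex : ∃ j : Fin (m+1), W.card ≤ (m+1) * (W.filter (fun u => g u = j)).card := by
    by_contra hcon
    push_neg at hcon
    have h2 : ∑ j : Fin (m+1), (m+1) * (W.filter (fun u => g u = j)).card
        < ∑ _j : Fin (m+1), W.card := by
      apply Finset.sum_lt_sum_of_nonempty Finset.univ_nonempty
      intro j _
      exact hcon j
    rw [Finset.sum_const, Finset.card_univ, Fintype.card_fin, smul_eq_mul,
      ← Finset.mul_sum, hfib] at h2
    omega
  obtain ⟨j, hjcard⟩ := hex
  refine ⟨W.filter (fun u => g u = j), Finset.filter_subset _ _, ?_, hjcard⟩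
  intro v hv
  rw [mem_filter] at hv
  calc (E.filter (fun e => v ∈ e ∧ e ⊆ W.filter (fun u => g u = j))).card
      ≤ (E.filter (fun e => (∀ u ∈ e, ∀ w ∈ e, g u = g w) ∧ v ∈ e)).card := by
        apply Finset.card_le_card
        intro e he
        rw [mem_filter] at he ⊢
        obtain ⟨heE, hve, hsub⟩ := he
        refine ⟨heE, fun u hu w hw => ?_, hve⟩
        have h1 := (mem_filter.1 (hsub hu)).2
        have h2 := (mem_filter.1 (hsub hw)).2
        rw [h1, h2]
    _ ≤ k := key v

lemma le_alphak {E : Finset (Finset V)} {k : ℕ} {S : Finset V} (h : Indep E k S) :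
    S.card ≤ alphak E k := by
  have h1 := Finset.le_sup
    (f := fun S : Finset V =>
      if ∀ v ∈ S, (E.filter (fun e => v ∈ e ∧ e ⊆ S)).card ≤ k then S.card else 0)
    (Finset.mem_univ S)
  have h2 : ∀ v ∈ S, (E.filter (fun e => v ∈ e ∧ e ⊆ S)).card ≤ k := h
  rwa [if_pos h2] at h1


set_option maxHeartbeats 1000000 in
lemma main_ind (k : ℕ) : ∀ (N : ℕ) (W : Finset V) (E : Finset (Finset V)), W.card ≤ N →
    (∀ e ∈ E, e ⊆ W ∧ 2 ≤ e.card) →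
    ∃ S : Finset V, S ⊆ W ∧ Indep E k S ∧
      (W.card : ℝ) * f (2 * E.card / (((k:ℝ)+1) * W.card)) ≤ (S.card : ℝ) := by
  intro N
  induction N with
  | zero =>
    intro W E hWN hE
    refine ⟨∅, Finset.empty_subset _, fun v hv => absurd hv (Finset.notMem_empty v), ?_⟩
    have h0 : W.card = 0 := Nat.le_zero.1 hWN
    rw [h0]
    simp
  | succ N ih =>
    intro W E hWN hE
    by_cases hW0 : W.card = 0
    · refine ⟨∅, Finset.empty_subset _, fun v hv => absurd hv (Finset.notMem_empty v), ?_⟩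
      rw [hW0]; simp
    have hn1 : 1 ≤ W.card := Nat.one_le_iff_ne_zero.2 hW0
    have hnR : (0:ℝ) < (W.card:ℝ) := by exact_mod_cast hn1
    have hc : (0:ℝ) < (k:ℝ)+1 := by positivity
    set x : ℝ := 2 * E.card / (((k:ℝ)+1) * W.card) with hxdef
    have hx0 : 0 ≤ x := by positivity
    set m : ℕ := ⌊x⌋.toNat with hmdef
    by_cases hA : ∀ v : V, (E.filter (fun e => v ∈ e)).card < (k+1)*(m+1)
    · -- all degrees small: use the coloring lemma
      obtain ⟨S, hSW, hSI, hScard⟩ := partition_lemma k m E W hE hA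
      refine ⟨S, hSW, hSI, ?_⟩
      have h1 : f x ≤ 1 / ((m:ℝ)+1) := by rw [hmdef]; exact f_le hx0
      have h2 : (W.card:ℝ) ≤ ((m:ℝ)+1) * (S.card:ℝ) := by exact_mod_cast hScard
      calc (W.card:ℝ) * f x ≤ (W.card:ℝ) * (1/((m:ℝ)+1)) :=
            mul_le_mul_of_nonneg_left h1 (le_of_lt hnR)
        _ ≤ (S.card:ℝ) := by
            rw [mul_one_div, div_le_iff₀ (by positivity)]
            linarith [h2]
    · -- delete a vertex of large degree
      push_neg at hA
      obtain ⟨v, hv⟩ := hA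
      have hdegpos : 0 < (E.filter (fun e => v ∈ e)).card :=
        lt_of_lt_of_le (Nat.succ_le_iff.1 (Nat.one_le_iff_ne_zero.2 (by positivity))) hv
      obtain ⟨e0, he0⟩ := Finset.card_pos.1 hdegpos
      rw [Finset.mem_filter] at he0
      have hvW : v ∈ W := (hE e0 he0.1).1 he0.2
      set W' : Finset V := W.erase v with hW'def
      set E' : Finset (Finset V) := E.filter (fun e => v ∉ e) with hE'def
      have hW'card : W'.card = W.card - 1 := Finset.card_erase_of_mem hvW
      have hW'N : W'.card ≤ N := by omega
      have hE'h : ∀ e ∈ E', e ⊆ W' ∧ 2 ≤ e.card := by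
        intro e he
        rw [hE'def, Finset.mem_filter] at he
        exact ⟨Finset.subset_erase.2 ⟨(hE e he.1).1, he.2⟩, (hE e he.1).2⟩
      obtain ⟨S, hSW', hSI', hScard⟩ := ih W' E' hW'N hE'h
      have hvS : v ∉ S := fun hvs => (Finset.mem_erase.1 (hSW' hvs)).1 rfl
      refine ⟨S, hSW'.trans (Finset.erase_subset v W), ?_, ?_⟩
      · intro u hu
        have hfe : E.filter (fun e => u ∈ e ∧ e ⊆ S) = E'.filter (fun e => u ∈ e ∧ e ⊆ S) := by
          rw [hE'def, Finset.filter_filter]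
          apply Finset.filter_congr
          intro e heE
          constructor
          · rintro ⟨hue, hes⟩
            exact ⟨fun hve => hvS (hes hve), hue, hes⟩
          · rintro ⟨-, h2, h3⟩
            exact ⟨h2, h3⟩
        rw [hfe]
        exact hSI' u hu
      · -- the numerical estimate
        have hW2 : 2 ≤ W.card := le_trans (hE e0 he0.1).2 (Finset.card_le_card (hE e0 he0.1).1)
        have hn'R : (0:ℝ) < (W'.card:ℝ) := by
          rw [hW'card]
          have : 1 ≤ W.card - 1 := by omega
          exact_mod_cast Nat.lt_of_lt_of_le Nat.zero_lt_one this
        have hW'cast : (W'.card:ℝ) = (W.card:ℝ) - 1 := by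
          rw [hW'card]
          push_cast [Nat.cast_sub hn1]
          ring
        set x' : ℝ := 2 * E'.card / (((k:ℝ)+1) * W'.card) with hx'def
        have hx'0 : 0 ≤ x' := by positivity
        set M : ℝ := (m:ℝ) with hMdef
        have hsplitE : (E.filter (fun e => v ∈ e)).card + (E.filter (fun e => v ∉ e)).card
            = E.card := Finset.card_filter_add_card_filter_not (p := fun e => v ∈ e)
        have hEsum : (E'.card:ℕ) + (k+1)*(m+1) ≤ E.card := by
          rw [hE'def]
          omega
        -- key division inequality
        have key2 : 2*(E'.card:ℝ)/((k:ℝ)+1) + 2*(M+1) ≤ 2*(E.card:ℝ)/((k:ℝ)+1) := by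
          have h5 : (E'.card:ℝ) + ((k:ℝ)+1)*(M+1) ≤ (E.card:ℝ) := by
            rw [hMdef]
            exact_mod_cast hEsum
          rw [div_add' _ _ _ (ne_of_gt hc), div_le_div_iff₀ hc hc]
          nlinarith [h5]
        have hD : (0:ℝ) < (M+1)*(M+2) := by positivity
        have hxval : (W.card:ℝ) * x = 2*(E.card:ℝ)/((k:ℝ)+1) := by
          rw [hxdef]
          field_simp
        have hx'val : (W'.card:ℝ) * x' = 2*(E'.card:ℝ)/((k:ℝ)+1) := by
          rw [hx'def]
          field_simp
        have hkey : (W.card:ℝ) * Lf m x ≤ (W'.card:ℝ) * Lf m x' := by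
          rw [Lf, Lf, ← hMdef, ← mul_div_assoc, ← mul_div_assoc,
            div_le_div_iff₀ hD hD]
          have e1 : (W.card:ℝ) * (2*(M+1) - x) = (W.card:ℝ)*(2*(M+1)) - 2*(E.card:ℝ)/((k:ℝ)+1) := by
            rw [mul_sub, hxval]
          have e2 : (W'.card:ℝ) * (2*(M+1) - x') = (W'.card:ℝ)*(2*(M+1)) - 2*(E'.card:ℝ)/((k:ℝ)+1) := by
            rw [mul_sub, hx'val]
          rw [e1, e2, hW'cast]
          have hstep : (W.card:ℝ)*(2*(M+1)) - 2*(E.card:ℝ)/((k:ℝ)+1)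
              ≤ ((W.card:ℝ)-1)*(2*(M+1)) - 2*(E'.card:ℝ)/((k:ℝ)+1) := by
            nlinarith [key2]
          nlinarith [hstep, hD]
        calc (W.card:ℝ) * f x = (W.card:ℝ) * Lf m x := by rw [f_eq_Lf hx0, hmdef]
          _ ≤ (W'.card:ℝ) * Lf m x' := hkey
          _ ≤ (W'.card:ℝ) * f x' := mul_le_mul_of_nonneg_left (Lf_le_f hx'0 m) (le_of_lt hn'R)
          _ ≤ (S.card:ℝ) := hScard

end

/-- Let `k ≥ 0` be an integer. For any `s`-uniform hypergraph `H` (`s ≥ 2`) of order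
`n ≥ 1` with average degree `d`, we have `α_k(H) ≥ f(2d/(s(k+1)))·n`. -/
theorem alphak_ge_f_avg_degree
    {V : Type*} [Fintype V] [DecidableEq V] (s k : ℕ) (hs : 2 ≤ s)
    (E : Finset (Finset V)) (hunif : ∀ e ∈ E, e.card = s)
    (hn : 1 ≤ Fintype.card V)
    (d : ℝ) (hd : d = (s : ℝ) * (E.card : ℝ) / (Fintype.card V : ℝ)) :
    (alphak E k : ℝ) ≥ f (2 * d / ((s : ℝ) * ((k : ℝ) + 1))) * (Fintype.card V : ℝ) := by
  obtain ⟨S, -, hSI, hnum⟩ := main_ind k (Fintype.card V) Finset.univ E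
    (le_of_eq (Finset.card_univ)) (fun e he => ⟨Finset.subset_univ e, by rw [hunif e he]; exact hs⟩)
  have hsR : (0:ℝ) < (s:ℝ) := by positivity
  have hsR' : (s:ℝ) ≠ 0 := by positivity
  have hnR : (0:ℝ) < (Fintype.card V : ℝ) := by exact_mod_cast hn
  have hnR' : (Fintype.card V : ℝ) ≠ 0 := ne_of_gt hnR
  have harg : 2 * d / ((s:ℝ) * ((k:ℝ)+1)) = 2 * (E.card:ℝ) / (((k:ℝ)+1) * ((Finset.univ : Finset V).card : ℝ)) := by
    rw [hd, Finset.card_univ]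
    field_simp
  rw [ge_iff_le, harg, mul_comm]
  calc (Fintype.card V : ℝ) * f (2 * (E.card:ℝ) / (((k:ℝ)+1) * ((Finset.univ : Finset V).card : ℝ)))
      = ((Finset.univ : Finset V).card : ℝ) * f (2 * (E.card:ℝ) / (((k:ℝ)+1) * ((Finset.univ : Finset V).card : ℝ))) := by
        rw [Finset.card_univ]
    _ ≤ (S.card : ℝ) := hnum
    _ ≤ (alphak E k : ℝ) := by exact_mod_cast le_alphak hSI
end

section
/- Let k ≥ 1 be an integer, let H be an s-uniform hypergraph (s ≥ 2) of order n ≥ 1 with maximum degree Δ and average degree d (so d ≤ Δ). If Δ > k(k+1), then ⌈Δ/k⌉ > 2d/(s(k+1)) + 1, and consequently n/⌈Δ/k⌉ < s(k+1)·n/(s(k+1) + 2d); that is, the average-degree lower bound for α_k(H) is strictly better than the maximum-degree lower bound. -/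
/-- Let `k ≥ 1`, let `H` be an `s`-uniform hypergraph (`s ≥ 2`) of order `n ≥ 1` with
maximum degree `Δ` and average degree `d` (so `d ≤ Δ`). If `Δ > k(k+1)`, then
`⌈Δ/k⌉ > 2d/(s(k+1)) + 1`, and consequently
`n/⌈Δ/k⌉ < s(k+1)·n/(s(k+1) + 2d)`: the average-degree lower bound for `α_k(H)` is
strictly better than the maximum-degree lower bound. -/
theorem avg_degree_bound_better_than_max_degree_bound
    {V : Type*} [Fintype V] [DecidableEq V] (s k : ℕ) (hk : 1 ≤ k) (hs : 2 ≤ s)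
    (E : Finset (Finset V)) (hunif : ∀ e ∈ E, e.card = s)
    (hn : 1 ≤ Fintype.card V)
    (Δ : ℕ) (hΔ : Δ = Finset.univ.sup (fun v => (E.filter (fun e => v ∈ e)).card))
    (d : ℝ) (hd : d = (s : ℝ) * (E.card : ℝ) / (Fintype.card V : ℝ))
    (hdΔ : d ≤ (Δ : ℝ))
    (h : k * (k + 1) < Δ) :
    ((⌈(Δ : ℝ) / (k : ℝ)⌉ : ℝ) > 2 * d / ((s : ℝ) * ((k : ℝ) + 1)) + 1) ∧
    (Fintype.card V : ℝ) / (⌈(Δ : ℝ) / (k : ℝ)⌉ : ℝ) <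
      (s : ℝ) * ((k : ℝ) + 1) * (Fintype.card V : ℝ) /
        ((s : ℝ) * ((k : ℝ) + 1) + 2 * d) := by
  have hkpos : (0:ℝ) < k := by exact_mod_cast hk
  have hspos : (0:ℝ) < s := by positivity
  have hs2 : (2:ℝ) ≤ s := by exact_mod_cast hs
  have hA : (0:ℝ) < (s:ℝ) * ((k:ℝ) + 1) := by positivity
  have hnpos : (0:ℝ) < (Fintype.card V : ℝ) := by exact_mod_cast hn
  have hd0 : 0 ≤ d := by rw [hd]; positivity
  have hΔk : (k:ℝ) * ((k:ℝ) + 1) < (Δ:ℝ) := by exact_mod_cast h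
  have hΔ0 : (0:ℝ) ≤ (Δ:ℝ) := by positivity
  have key : 2 * d / ((s:ℝ) * ((k:ℝ) + 1)) + 1 < (Δ:ℝ) / (k:ℝ) := by
    rw [div_add' _ _ _ (ne_of_gt hA), div_lt_div_iff₀ hA hkpos]
    nlinarith [mul_le_mul_of_nonneg_right hdΔ hkpos.le,
      mul_nonneg (mul_nonneg (by linarith : (0:ℝ) ≤ (s:ℝ) - 2) hΔ0) hkpos.le,
      mul_lt_mul_of_pos_left hΔk hspos]
  have part1 : ((⌈(Δ : ℝ) / (k : ℝ)⌉ : ℝ) > 2 * d / ((s : ℝ) * ((k : ℝ) + 1)) + 1) :=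
    lt_of_lt_of_le key (Int.le_ceil _)
  refine ⟨part1, ?_⟩
  have hCpos : (0:ℝ) < ((⌈(Δ : ℝ) / (k : ℝ)⌉ : ℤ) : ℝ) :=
    lt_trans (by positivity) part1
  rw [div_lt_div_iff₀ hCpos (by positivity)]
  have h2 : (s:ℝ) * ((k:ℝ) + 1) + 2 * d < (s:ℝ) * ((k:ℝ) + 1) * ((⌈(Δ : ℝ) / (k : ℝ)⌉ : ℤ) : ℝ) := by
    have := mul_lt_mul_of_pos_left part1 hA
    calc (s:ℝ) * ((k:ℝ) + 1) + 2 * d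
        = (s:ℝ) * ((k:ℝ) + 1) * (2 * d / ((s:ℝ) * ((k:ℝ) + 1)) + 1) := by
          field_simp; ring
      _ < _ := this
  nlinarith [mul_lt_mul_of_pos_left h2 hnpos]
end
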